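/- Let c, d be increasing positive integer sequences of lengths m, n, with l = max(m,n), h = max(c_m, d_n). Let A ⊆ L_c^{(≤m)} and B ⊆ L_d^{(≤n)} be cross-intersecting families of labeled sets. If A* and B* are obtained from A and B by applying all operations Γ_{x,y} for x ∈ [l], y ∈ [2,h] (in the order Γ_{1,2},…,Γ_{1,h}, Γ_{2,2},…, Γ_{l,h}, simultaneously to both families), then A ∩ B ∩ ([l] × {1}) ≠ ∅ for every A ∈ A*, B ∈ B*. -/

import Mathlib

def gamma (x y : ℕ) (S : Finset (ℕ × ℕ)) : Finset (ℕ × ℕ) :=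
  if (x, y) ∈ S then insert (x, 1) (S.erase (x, y)) else S

def Gamma (x y : ℕ) (F : Finset (Finset (ℕ × ℕ))) : Finset (Finset (ℕ × ℕ)) :=
  (F.filter fun A => gamma x y A ∈ F) ∪
    ((F.filter fun A => gamma x y A ∉ F).image (gamma x y))

def IsLabeled (m : ℕ) (c : ℕ → ℕ) (S : Finset (ℕ × ℕ)) : Prop :=
  S.Nonempty ∧ (∀ p ∈ S, 1 ≤ p.1 ∧ p.1 ≤ m ∧ 1 ≤ p.2 ∧ p.2 ≤ c p.1) ∧
    ∀ p ∈ S, ∀ q ∈ S, p.1 = q.1 → p = q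

/-- The list of pairs `(x, y)` for `x ∈ [l]`, `y ∈ [2, h]`, in the order
`(1,2), …, (1,h), (2,2), …, (l,h)`. -/
def allPairs (l h : ℕ) : List (ℕ × ℕ) :=
  (List.range' 1 l).flatMap fun x => (List.range' 2 (h - 1)).map fun y => (x, y)

/-- Apply `Γ_{x,y}` for all pairs in `allPairs l h`, in order. -/
def compressAll (l h : ℕ) (F : Finset (Finset (ℕ × ℕ))) : Finset (Finset (ℕ × ℕ)) :=
  (allPairs l h).foldl (fun F p => Gamma p.1 p.2 F) F

/-!
Each `Γ_{x,y}` with `y ≠ 1` preserves labeledness and cross-intersection, and makes the family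
stable under `γ_{x,y}`. On labeled sets the `γ`'s commute, so later operations keep that
stability: `A*` is stable under every `γ_{x,y}`, `x ∈ [l]`, `y ∈ [2, h]`. If `S ∈ A*` and
`T ∈ B*` have a common point `(x, y)` with `y ≠ 1`, then `γ_{x,y} S ∈ A*` meets `T` exactly in
`(S ∩ T) \ {(x, y)}`, because `(x, 1) ∉ T`; induction on `|S ∩ T|` therefore reaches a common
point in row `1`.
-/

theorem mem_gamma {x y : ℕ} {S : Finset (ℕ × ℕ)} {p : ℕ × ℕ} :
    p ∈ gamma x y S ↔ p = (x, 1) ∧ (x, y) ∈ S ∨ p ∈ S ∧ p ≠ (x, y) := by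
  unfold gamma
  split_ifs with h <;> grind

theorem gamma_of_not_mem {x y : ℕ} {S : Finset (ℕ × ℕ)} (h : (x, y) ∉ S) :
    gamma x y S = S := if_neg h

theorem not_mem_gamma {x y : ℕ} {S : Finset (ℕ × ℕ)} (hy : y ≠ 1) :
    (x, y) ∉ gamma x y S := by
  simp [mem_gamma, hy]

theorem gamma_idem {x y : ℕ} {S : Finset (ℕ × ℕ)} (hy : y ≠ 1) :
    gamma x y (gamma x y S) = gamma x y S :=
  gamma_of_not_mem (not_mem_gamma hy)

theorem IsLabeled.injOn_fst {m : ℕ} {c : ℕ → ℕ} {S : Finset (ℕ × ℕ)} (hS : IsLabeled m c S) :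
    Set.InjOn Prod.fst (S : Set (ℕ × ℕ)) :=
  fun p hp q hq => hS.2.2 p hp q hq

theorem injOn_fst_gamma {x y : ℕ} {S : Finset (ℕ × ℕ)}
    (hS : Set.InjOn Prod.fst (S : Set (ℕ × ℕ))) :
    Set.InjOn Prod.fst (gamma x y S : Set (ℕ × ℕ)) := by
  intro p hp q hq hpq
  simp only [Finset.mem_coe, mem_gamma] at hp hq
  rcases hp with ⟨rfl, hxy⟩ | ⟨hp, hpne⟩ <;> rcases hq with ⟨rfl, hxy⟩ | ⟨hq, hqne⟩
  · rfl
  · exact absurd (hS hxy hq hpq).symm hqne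
  · exact absurd (hS hxy hp hpq.symm).symm hpne
  · exact hS hp hq hpq

theorem isLabeled_gamma {m x y : ℕ} {c : ℕ → ℕ} {S : Finset (ℕ × ℕ)}
    (hS : IsLabeled m c S) : IsLabeled m c (gamma x y S) := by
  refine ⟨?_, fun p hp => ?_, fun p hp q hq => injOn_fst_gamma hS.injOn_fst hp hq⟩
  · by_cases h : (x, y) ∈ S
    · exact ⟨(x, 1), mem_gamma.2 (Or.inl ⟨rfl, h⟩)⟩
    · obtain ⟨q, hq⟩ := hS.1
      exact ⟨q, mem_gamma.2 (Or.inr ⟨hq, fun e => h (e ▸ hq)⟩)⟩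
  · rcases mem_gamma.1 hp with ⟨rfl, h⟩ | ⟨h, -⟩
    · have := hS.2.1 _ h
      simp only at this ⊢
      omega
    · exact hS.2.1 p h

theorem gamma_comm {x y x' y' : ℕ} {S : Finset (ℕ × ℕ)}
    (hS : Set.InjOn Prod.fst (S : Set (ℕ × ℕ))) (hy : y ≠ 1) (hy' : y' ≠ 1)
    (hne : (x, y) ≠ (x', y')) :
    gamma x y (gamma x' y' S) = gamma x' y' (gamma x y S) := by
  have hx : (x, y) ∈ S → (x', y') ∈ S → x ≠ x' := fun h h' hx => hne (hS h h' hx)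
  ext p
  simp only [mem_gamma]
  grind

theorem mem_Gamma {x y : ℕ} {F : Finset (Finset (ℕ × ℕ))} {S : Finset (ℕ × ℕ)} :
    S ∈ Gamma x y F ↔
      S ∈ F ∧ gamma x y S ∈ F ∨ ∃ T ∈ F, gamma x y T ∉ F ∧ gamma x y T = S := by
  simp only [Gamma, Finset.mem_union, Finset.mem_filter, Finset.mem_image]
  tauto

theorem forall_mem_Gamma {P : Finset (ℕ × ℕ) → Prop} {x y : ℕ}
    {F : Finset (Finset (ℕ × ℕ))} (hP : ∀ S, P S → P (gamma x y S)) (hF : ∀ S ∈ F, P S) :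
    ∀ S ∈ Gamma x y F, P S := by
  intro S hS
  rcases mem_Gamma.1 hS with ⟨hS, -⟩ | ⟨T, hT, -, rfl⟩
  exacts [hF S hS, hP T (hF T hT)]

theorem injOn_fst_of_mem_Gamma {x y : ℕ} {F : Finset (Finset (ℕ × ℕ))}
    (hF : ∀ S ∈ F, Set.InjOn Prod.fst (S : Set (ℕ × ℕ))) :
    ∀ S ∈ Gamma x y F, Set.InjOn Prod.fst (S : Set (ℕ × ℕ)) :=
  forall_mem_Gamma (fun _ => injOn_fst_gamma) hF

def CrossIntersecting {α : Type*} [DecidableEq α] (A B : Finset (Finset α)) : Prop :=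
  ∀ S ∈ A, ∀ T ∈ B, (S ∩ T).Nonempty

def IsStable (x y : ℕ) (F : Finset (Finset (ℕ × ℕ))) : Prop :=
  ∀ S ∈ F, gamma x y S ∈ F

theorem isStable_Gamma_self {x y : ℕ} {F : Finset (Finset (ℕ × ℕ))} (hy : y ≠ 1) :
    IsStable x y (Gamma x y F) := by
  intro S hS
  rcases mem_Gamma.1 hS with ⟨-, hgS⟩ | ⟨T, -, -, rfl⟩
  · exact mem_Gamma.2 (Or.inl ⟨hgS, by rwa [gamma_idem hy]⟩)
  · rwa [gamma_idem hy]

theorem IsStable.Gamma_of_ne {x y x' y' : ℕ} {F : Finset (Finset (ℕ × ℕ))}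
    (hF : IsStable x y F) (hinj : ∀ S ∈ F, Set.InjOn Prod.fst (S : Set (ℕ × ℕ)))
    (hy : y ≠ 1) (hy' : y' ≠ 1) (hne : (x, y) ≠ (x', y')) :
    IsStable x y (Gamma x' y' F) := by
  intro S hS
  rcases mem_Gamma.1 hS with ⟨hS, hgS⟩ | ⟨T, hT, -, rfl⟩
  · refine mem_Gamma.2 (Or.inl ⟨hF S hS, ?_⟩)
    rw [← gamma_comm (hinj S hS) hy hy' hne]
    exact hF _ hgS
  · rw [gamma_comm (hinj T hT) hy hy' hne]
    by_cases hc : gamma x' y' (gamma x y T) ∈ F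
    · exact mem_Gamma.2 (Or.inl ⟨hc, by rwa [gamma_idem hy']⟩)
    · exact mem_Gamma.2 (Or.inr ⟨gamma x y T, hF T hT, hc, rfl⟩)

theorem inter_gamma_nonempty {x y : ℕ} {S T : Finset (ℕ × ℕ)}
    (hT : Set.InjOn Prod.fst (T : Set (ℕ × ℕ))) (hy : y ≠ 1)
    (hST : (S ∩ T).Nonempty) (hgST : (gamma x y S ∩ T).Nonempty) :
    (S ∩ gamma x y T).Nonempty := by
  by_cases hex : ∃ p ∈ S ∩ T, p ≠ (x, y)
  · obtain ⟨p, hp, hpne⟩ := hex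
    rw [Finset.mem_inter] at hp
    exact ⟨p, Finset.mem_inter.2 ⟨hp.1, mem_gamma.2 (Or.inr ⟨hp.2, hpne⟩)⟩⟩
  · -- here `S ∩ T = {(x, y)}`, so `γ_{x,y} S` can only meet `T` in `(x, 1)`
    push Not at hex
    obtain ⟨e, he⟩ := hST
    obtain rfl := hex e he
    obtain ⟨q, hq⟩ := hgST
    rw [Finset.mem_inter, mem_gamma] at hq
    rcases hq with ⟨⟨rfl, -⟩ | ⟨hqS, hqne⟩, hqT⟩
    · exact absurd (congrArg Prod.snd (hT hqT (Finset.mem_inter.1 he).2 rfl)) hy.symm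
    · exact absurd (hex q (Finset.mem_inter.2 ⟨hqS, hqT⟩)) hqne

theorem crossIntersecting_Gamma {x y : ℕ} {A B : Finset (Finset (ℕ × ℕ))}
    (hAB : CrossIntersecting A B)
    (hA : ∀ S ∈ A, Set.InjOn Prod.fst (S : Set (ℕ × ℕ)))
    (hB : ∀ T ∈ B, Set.InjOn Prod.fst (T : Set (ℕ × ℕ))) (hy : y ≠ 1) :
    CrossIntersecting (Gamma x y A) (Gamma x y B) := by
  intro S' hS' T' hT'
  rcases mem_Gamma.1 hS' with ⟨hS, hgS⟩ | ⟨S, hS, -, rfl⟩ <;>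
    rcases mem_Gamma.1 hT' with ⟨hT, hgT⟩ | ⟨T, hT, -, rfl⟩
  · exact hAB _ hS _ hT
  · exact inter_gamma_nonempty (hB T hT) hy (hAB _ hS _ hT) (hAB _ hgS _ hT)
  · rw [Finset.inter_comm]
    exact inter_gamma_nonempty (hA S hS) hy (Finset.inter_comm S T' ▸ hAB _ hS _ hT)
      (Finset.inter_comm S _ ▸ hAB _ hS _ hgT)
  · obtain ⟨e, he⟩ := hAB _ hS _ hT
    rw [Finset.mem_inter] at he
    by_cases hexy : e = (x, y)
    · subst hexy
      exact ⟨(x, 1), Finset.mem_inter.2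
        ⟨mem_gamma.2 (Or.inl ⟨rfl, he.1⟩), mem_gamma.2 (Or.inl ⟨rfl, he.2⟩)⟩⟩
    · exact ⟨e, Finset.mem_inter.2
        ⟨mem_gamma.2 (Or.inr ⟨he.1, hexy⟩), mem_gamma.2 (Or.inr ⟨he.2, hexy⟩)⟩⟩

theorem forall_mem_foldl_Gamma {P : Finset (ℕ × ℕ) → Prop}
    (hP : ∀ x y S, P S → P (gamma x y S)) {L : List (ℕ × ℕ)} {F : Finset (Finset (ℕ × ℕ))}
    (hF : ∀ S ∈ F, P S) : ∀ S ∈ L.foldl (fun F p => Gamma p.1 p.2 F) F, P S := by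
  induction L generalizing F with
  | nil => exact hF
  | cons p L ih => exact ih (forall_mem_Gamma (hP p.1 p.2) hF)

theorem IsStable.foldl_Gamma {x y : ℕ} {L : List (ℕ × ℕ)} {F : Finset (Finset (ℕ × ℕ))}
    (hF : IsStable x y F) (hinj : ∀ S ∈ F, Set.InjOn Prod.fst (S : Set (ℕ × ℕ)))
    (hy : y ≠ 1) (hL : ∀ p ∈ L, p.2 ≠ 1) :
    IsStable x y (L.foldl (fun F p => Gamma p.1 p.2 F) F) := by
  induction L generalizing F with
  | nil => exact hF
  | cons p L ih =>
    refine ih ?_ (injOn_fst_of_mem_Gamma hinj)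
      (fun q hq => hL q (List.mem_cons_of_mem _ hq))
    by_cases hp : (x, y) = p
    · subst hp
      exact isStable_Gamma_self hy
    · exact hF.Gamma_of_ne hinj hy (hL p List.mem_cons_self) hp

theorem isStable_foldl_Gamma_of_mem {p : ℕ × ℕ} {L : List (ℕ × ℕ)}
    {F : Finset (Finset (ℕ × ℕ))} (hinj : ∀ S ∈ F, Set.InjOn Prod.fst (S : Set (ℕ × ℕ)))
    (hL : ∀ p ∈ L, p.2 ≠ 1) (hp : p ∈ L) :
    IsStable p.1 p.2 (L.foldl (fun F p => Gamma p.1 p.2 F) F) := by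
  induction L generalizing F with
  | nil => cases hp
  | cons q L ih =>
    have hL' : ∀ p ∈ L, p.2 ≠ 1 := fun p hp => hL p (List.mem_cons_of_mem _ hp)
    have hinj' := injOn_fst_of_mem_Gamma hinj (x := q.1) (y := q.2)
    rcases List.mem_cons.1 hp with rfl | hp
    · exact (isStable_Gamma_self (hL p List.mem_cons_self)).foldl_Gamma hinj'
        (hL p List.mem_cons_self) hL'
    · exact ih hinj' hL' hp

theorem crossIntersecting_foldl_Gamma {A B : Finset (Finset (ℕ × ℕ))} {L : List (ℕ × ℕ)}
    (hAB : CrossIntersecting A B) (hA : ∀ S ∈ A, Set.InjOn Prod.fst (S : Set (ℕ × ℕ)))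
    (hB : ∀ T ∈ B, Set.InjOn Prod.fst (T : Set (ℕ × ℕ))) (hL : ∀ p ∈ L, p.2 ≠ 1) :
    CrossIntersecting (L.foldl (fun F p => Gamma p.1 p.2 F) A)
      (L.foldl (fun F p => Gamma p.1 p.2 F) B) := by
  induction L generalizing A B with
  | nil => exact hAB
  | cons p L ih =>
    exact ih (crossIntersecting_Gamma hAB hA hB (hL p List.mem_cons_self))
      (injOn_fst_of_mem_Gamma hA) (injOn_fst_of_mem_Gamma hB)
      (fun q hq => hL q (List.mem_cons_of_mem _ hq))

theorem gamma_inter_eq_erase {x y : ℕ} {S T : Finset (ℕ × ℕ)}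
    (hT : Set.InjOn Prod.fst (T : Set (ℕ × ℕ))) (hy : y ≠ 1) (hxy : (x, y) ∈ T) :
    gamma x y S ∩ T = (S ∩ T).erase (x, y) := by
  have hx1 : (x, 1) ∉ T := fun h => hy (congrArg Prod.snd (hT hxy h rfl))
  ext p
  simp only [Finset.mem_inter, Finset.mem_erase, mem_gamma]
  grind

theorem exists_mem_inter_of_isStable {A B : Finset (Finset (ℕ × ℕ))}
    (hB : ∀ T ∈ B, Set.InjOn Prod.fst (T : Set (ℕ × ℕ))) (hAB : CrossIntersecting A B)
    (hA : ∀ S ∈ A, ∀ p ∈ S, p.2 ≠ 1 → IsStable p.1 p.2 A) :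
    ∀ S ∈ A, ∀ T ∈ B, ∃ x, (x, 1) ∈ S ∩ T := by
  intro S hS T hT
  induction hk : (S ∩ T).card using Nat.strong_induction_on generalizing S with
  | _ k ih =>
    obtain ⟨⟨x, y⟩, hxy⟩ := hAB S hS T hT
    by_cases hy : y = 1
    · exact ⟨x, hy ▸ hxy⟩
    have hST := gamma_inter_eq_erase (S := S) (hB T hT) hy (Finset.mem_inter.1 hxy).2
    have hlt : (gamma x y S ∩ T).card < k := hk ▸ hST ▸ Finset.card_erase_lt_of_mem hxy
    obtain ⟨x', hx'⟩ := ih _ hlt _ (hA S hS _ (Finset.mem_inter.1 hxy).1 hy S hS) rfl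
    exact ⟨x', Finset.mem_of_mem_erase (hST ▸ hx')⟩

theorem mem_allPairs {l h : ℕ} {p : ℕ × ℕ} :
    p ∈ allPairs l h ↔ 1 ≤ p.1 ∧ p.1 ≤ l ∧ 2 ≤ p.2 ∧ p.2 ≤ h := by
  simp only [allPairs, List.mem_flatMap, List.mem_map, List.mem_range'_1]
  constructor
  · rintro ⟨x, hx, y, hy, rfl⟩
    omega
  · exact fun hp => ⟨p.1, by omega, p.2, by omega, rfl⟩

theorem stmt12_general (m n : ℕ) (c d : ℕ → ℕ)
    (hcmono : ∀ i j, 1 ≤ i → i ≤ j → j ≤ m → c i ≤ c j)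
    (A B : Finset (Finset (ℕ × ℕ)))
    (hA : ∀ S ∈ A, IsLabeled m c S) (hB : ∀ S ∈ B, IsLabeled n d S)
    (hcross : ∀ S ∈ A, ∀ T ∈ B, (S ∩ T).Nonempty) :
    ∀ S ∈ compressAll (max m n) (max (c m) (d n)) A,
      ∀ T ∈ compressAll (max m n) (max (c m) (d n)) B,
        (S ∩ T ∩ (Finset.Icc 1 (max m n) ×ˢ ({1} : Finset ℕ))).Nonempty := by
  set l := max m n
  set h := max (c m) (d n)
  have hml : m ≤ l := le_max_left m n
  have hch : c m ≤ h := le_max_left (c m) (d n)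
  have hL : ∀ p ∈ allPairs l h, p.2 ≠ 1 := fun p hp => by
    have := (mem_allPairs.1 hp).2.2.1
    omega
  have hA' : ∀ S ∈ compressAll l h A, IsLabeled m c S :=
    forall_mem_foldl_Gamma (fun _ _ _ => isLabeled_gamma) hA
  have hinjA := fun S hS => (hA S hS).injOn_fst
  have hinjB := fun T hT => (hB T hT).injOn_fst
  have hstable : ∀ S ∈ compressAll l h A, ∀ p ∈ S, p.2 ≠ 1 →
      IsStable p.1 p.2 (compressAll l h A) := by
    intro S hS p hp hp1
    obtain ⟨hx1, hxm, hy1, hyc⟩ := (hA' S hS).2.1 p hp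
    have := hcmono p.1 m hx1 hxm le_rfl
    exact isStable_foldl_Gamma_of_mem hinjA hL (mem_allPairs.2 (by omega))
  intro S hS T hT
  obtain ⟨x, hx⟩ := exists_mem_inter_of_isStable
    (forall_mem_foldl_Gamma (fun _ _ _ => injOn_fst_gamma) hinjB)
    (crossIntersecting_foldl_Gamma hcross hinjA hinjB hL) hstable S hS T hT
  obtain ⟨hx1, hxm, -⟩ := (hA' S hS).2.1 _ (Finset.mem_inter.1 hx).1
  exact ⟨(x, 1), Finset.mem_inter.2 ⟨hx, Finset.mem_product.2
    ⟨Finset.mem_Icc.2 ⟨hx1, hxm.trans hml⟩, Finset.mem_singleton_self 1⟩⟩⟩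

theorem stmt12 (m n : ℕ) (hm : 1 ≤ m) (hn : 1 ≤ n) (c d : ℕ → ℕ)
    (hcmono : ∀ i j, 1 ≤ i → i ≤ j → j ≤ m → c i ≤ c j)
    (hcpos : ∀ i, 1 ≤ i → i ≤ m → 1 ≤ c i)
    (hdmono : ∀ i j, 1 ≤ i → i ≤ j → j ≤ n → d i ≤ d j)
    (hdpos : ∀ i, 1 ≤ i → i ≤ n → 1 ≤ d i)
    (A B : Finset (Finset (ℕ × ℕ)))
    (hA : ∀ S ∈ A, IsLabeled m c S) (hB : ∀ S ∈ B, IsLabeled n d S)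
    (hcross : ∀ S ∈ A, ∀ T ∈ B, (S ∩ T).Nonempty) :
    ∀ S ∈ compressAll (max m n) (max (c m) (d n)) A,
      ∀ T ∈ compressAll (max m n) (max (c m) (d n)) B,
        (S ∩ T ∩ (Finset.Icc 1 (max m n) ×ˢ ({1} : Finset ℕ))).Nonempty :=
  stmt12_general m n c d hcmono A B hA hB hcross
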